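/- Proposition 2.8 (abstract approximation of compositions of a polynomially growing number of functions with Lipschitz constant 1): Let c ∈ ℕ and p ∈ [1,∞]. For every d ∈ ℕ let k(d) ∈ {1,…,c·d^c} and 𝔡_1^d, 𝔡_2^d, …, 𝔡_{k(d)+1}^d ∈ {1,…,d^c}; for every d ∈ ℕ and i ∈ {1,…,k(d)} let Q_i^d ⊆ ℝ^{𝔡_i^d} be a 𝔡_i^d-dimensional hypercube and let g_i^d ∈ C(Q_i^d, ℝ^{𝔡_{i+1}^d}). Assume for all d ∈ ℕ, i ∈ {1,…,k(d)}, ε ∈ (0,1] that Cost_p(g_i^d, 1, ε) ≤ c·d^c·ε^{−c}, and assume for all d ∈ ℕ and i ∈ {1,…,k(d)−1} that g_i^d(Q_i^d) ⊆ Q_{i+1}^d. For every d ∈ ℕ let F_d = g_{k(d)}^d ∘ g_{k(d)−1}^d ∘ ⋯ ∘ g_1^d ∈ C(Q_1^d, ℝ^{𝔡_{k(d)+1}^d}). Then there exists K ∈ ℕ such that for every d ∈ ℕ and ε ∈ (0,1] there exists a DNN Φ with R(Φ) ∈ C(ℝ^{𝔡_1^d}, ℝ^{𝔡_{k(d)+1}^d}),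 P(Φ) ≤ K·d^K·ε^{−c}, and ‖R(Φ)(x) − F_d(x)‖_p ≤ ε for all x ∈ Q_1^d. -/

import Mathlib

open scoped BigOperators ENNReal

noncomputable section

/-- A ReLU deep neural network with `L + 1` affine layers (so depth at least one),
layer dimensions `ℓ 0, ℓ 1, …, ℓ (L + 1)`, weight matrices `W k` and bias vectors `b k`
(values of `ℓ`, `W`, `b` beyond layer index `L` are irrelevant for the realization
and for the number of parameters). -/
structure DNN where
  L : ℕ
  ℓ : ℕ → ℕ
  W : (k : ℕ) → Matrix (Fin (ℓ (k + 1))) (Fin (ℓ k)) ℝ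
  b : (k : ℕ) → Fin (ℓ (k + 1)) → ℝ

namespace DNN

/-- The number of parameters `P(Φ) = ∑_{k=1}^{L} ℓ_k (ℓ_{k-1} + 1)` of a DNN. -/
def params (Φ : DNN) : ℕ :=
  ∑ k ∈ Finset.range (Φ.L + 1), Φ.ℓ (k + 1) * (Φ.ℓ k + 1)

/-- The `k`-th affine layer function `x ↦ W_k x + b_k`. -/
def affine (Φ : DNN) (k : ℕ) (x : Fin (Φ.ℓ k) → ℝ) : Fin (Φ.ℓ (k + 1)) → ℝ :=
  fun i => (∑ j, Φ.W k i j * x j) + Φ.b k i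

/-- The value after `k` affine layers, each followed by the ReLU activation. -/
def hidden (Φ : DNN) : (k : ℕ) → (Fin (Φ.ℓ 0) → ℝ) → (Fin (Φ.ℓ k) → ℝ)
  | 0 => id
  | k + 1 => fun x i => max (affine Φ k (hidden Φ k x) i) 0

/-- The realization `R(Φ)`: all affine layers with ReLU in between (no activation after
the last affine layer). -/
def realize (Φ : DNN) (x : Fin (Φ.ℓ 0) → ℝ) : Fin (Φ.ℓ (Φ.L + 1)) → ℝ :=
  affine Φ Φ.L (hidden Φ Φ.L x)

/-- `Φ.Realizes f` means that the realization of `Φ` is the function `f : ℝ^m → ℝ^n`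
(in particular the input and output dimensions of `Φ` are `m` and `n`). -/
def Realizes (Φ : DNN) {m n : ℕ} (f : (Fin m → ℝ) → (Fin n → ℝ)) : Prop :=
  ∃ (hm : Φ.ℓ 0 = m) (hn : Φ.ℓ (Φ.L + 1) = n),
    ∀ (x : Fin m → ℝ) (i : Fin n),
      f x i = realize Φ (fun j => x (Fin.cast hm j)) (Fin.cast hn.symm i)

end DNN

/-- The `ℓ^p`-norm on `ℝ^k` for `p ∈ [1,∞]`. -/
def lpNorm (p : ℝ≥0∞) {k : ℕ} (x : Fin k → ℝ) : ℝ :=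
  if p = ∞ then ⨆ i, |x i| else (∑ i, |x i| ^ p.toReal) ^ (1 / p.toReal)

/-- The hypercube `[a,b]^d ⊆ ℝ^d`. -/
def cube (d : ℕ) (a b : ℝ) : Set (Fin d → ℝ) :=
  Set.Icc (fun _ => a) (fun _ => b)

/-- `Cost p D f L ε`: the minimal number of parameters of a DNN whose realization
approximates `f` on `D` up to `ε` in the `ℓ^p`-norm and is `L`-Lipschitz on `D`
with respect to the `ℓ^p`-norm; `∞` if no such DNN exists. -/
def Cost (p : ℝ≥0∞) {m n : ℕ} (D : Set (Fin m → ℝ))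
    (f : (Fin m → ℝ) → (Fin n → ℝ)) (L ε : ℝ) : ℝ≥0∞ :=
  sInf { N : ℝ≥0∞ | ∃ Φ : DNN, ∃ g : (Fin m → ℝ) → (Fin n → ℝ),
    Φ.Realizes g ∧ N = (Φ.params : ℝ≥0∞) ∧
    (∀ x ∈ D, lpNorm p (g x - f x) ≤ ε) ∧
    (∀ x ∈ D, ∀ y ∈ D, lpNorm p (g x - g y) ≤ L * lpNorm p (x - y)) }

/-- Given block sizes `d : Fin n → ℕ`, the index in `Fin (∑ j, d j)` of the `l`-th
coordinate of the `i`-th block (blocks are arranged consecutively). -/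
def blockIdx {n : ℕ} (d : Fin n → ℕ) (i : Fin n) (l : Fin (d i)) : Fin (∑ j, d j) :=
  ⟨(∑ j ∈ Finset.univ.filter (fun j => j < i), d j) + l.1, by
    have h1 : l.1 < d i := l.2
    have h2 : (∑ j ∈ Finset.univ.filter (fun j => j < i), d j) + d i ≤ ∑ j, d j := by
      have hsplit := Finset.sum_filter_add_sum_filter_not Finset.univ (fun j => j < i) d
      have h3 : d i ≤ ∑ j ∈ Finset.univ.filter (fun j => ¬ j < i), d j :=
        Finset.single_le_sum (fun _ _ => Nat.zero_le _) (by simp)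
      omega
    omega⟩

/-- The class `𝒫_{k,p}([a,b]^d, L)`: parallelizations `f = f_1 □ ⋯ □ f_m` of real-valued
functions `f_i` of at most `k` variables that are `L`-Lipschitz w.r.t. the `ℓ^p`-norm. -/
def MemPLip (k : ℕ) (p : ℝ≥0∞) (a b L : ℝ) {d m : ℕ}
    (f : (Fin d → ℝ) → (Fin m → ℝ)) : Prop :=
  ∃ (dims : Fin m → ℕ) (hd : ∑ i, dims i = d) (g : ∀ i, (Fin (dims i) → ℝ) → ℝ),
    (∀ i, 0 < dims i) ∧ (∀ i, dims i ≤ k) ∧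
    (∀ i, ∀ x ∈ cube (dims i) a b, ∀ y ∈ cube (dims i) a b,
      |g i x - g i y| ≤ L * lpNorm p (x - y)) ∧
    (∀ x ∈ cube d a b, ∀ i : Fin m,
      f x i = g i (fun l => x (Fin.cast hd (blockIdx dims i l))))

/-- The class `M([a,b]^d)`: parallelizations of maximum functions `m_{d_1} □ ⋯ □ m_{d_m}`. -/
def MemMaxClass (a b : ℝ) {d m : ℕ} (f : (Fin d → ℝ) → (Fin m → ℝ)) : Prop :=
  ∃ (dims : Fin m → ℕ) (hd : ∑ i, dims i = d),
    (∀ i, 0 < dims i) ∧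
    (∀ x ∈ cube d a b, ∀ i : Fin m,
      f x i = ⨆ l : Fin (dims i), x (Fin.cast hd (blockIdx dims i l)))

/-- The class `P([a,b]^d)`: parallelizations of product functions `p_{d_1} □ ⋯ □ p_{d_m}`. -/
def MemProdClass (a b : ℝ) {d m : ℕ} (f : (Fin d → ℝ) → (Fin m → ℝ)) : Prop :=
  ∃ (dims : Fin m → ℕ) (hd : ∑ i, dims i = d),
    (∀ i, 0 < dims i) ∧
    (∀ x ∈ cube d a b, ∀ i : Fin m,
      f x i = ∏ l : Fin (dims i), x (Fin.cast hd (blockIdx dims i l)))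

/-- `f` coincides on `[a,b]^d` with the extended maximum function
`𝔪_d(x) = (max{x_1}, max{x_1,x_2}, …, max{x_1,…,x_d})`. -/
def IsExtMaxOn (a b : ℝ) {d m : ℕ} (f : (Fin d → ℝ) → (Fin m → ℝ)) : Prop :=
  ∃ h : d = m, ∀ x ∈ cube d a b, ∀ i : Fin m,
    f x i = (Finset.Iic (Fin.cast h.symm i)).sup' Finset.nonempty_Iic x

/-- `f` coincides on `[a,b]^d` with the extended product function
`𝔭_d(x) = (x_1, x_1 x_2, …, x_1 ⋯ x_d)`. -/
def IsExtProdOn (a b : ℝ) {d m : ℕ} (f : (Fin d → ℝ) → (Fin m → ℝ)) : Prop :=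
  ∃ h : d = m, ∀ x ∈ cube d a b, ∀ i : Fin m,
    f x i = ∏ j ∈ Finset.Iic (Fin.cast h.symm i), x j

/-- Iterated composition: `compSeq dims f k = f_{k-1} ∘ ⋯ ∘ f_1 ∘ f_0`. -/
def compSeq (dims : ℕ → ℕ) (f : ∀ i : ℕ, (Fin (dims i) → ℝ) → (Fin (dims (i + 1)) → ℝ)) :
    (k : ℕ) → (Fin (dims 0) → ℝ) → (Fin (dims k) → ℝ)
  | 0 => id
  | k + 1 => fun x => f k (compSeq dims f k x)

/-!
Approximate every `g_i` to accuracy `δ = ε / (c d^c)` by a network that is `1`-Lipschitz on its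
cube, and chain these networks, projecting onto the next cube in between. The projection
`t ↦ max a (min b t) = b - relu (b - a - relu (t - a))` costs one extra layer of width at most
`d^c`, is `1`-Lipschitz and fixes the exact intermediate values, so the errors only add up:
after `k(d) ≤ c d^c` steps the error is at most `k(d) δ ≤ ε`. Each of the `k(d) + 1` blocks has at
most `c d^c δ^{-c} + d^c (d^c + 1)` parameters, which is polynomial in `d` times `ε^{-c}`.
-/

open scoped Matrix

section LpNorm

variable {p : ℝ≥0∞} {k : ℕ}

theorem lpNorm_mono {x y : Fin k → ℝ} (h : ∀ i, |x i| ≤ |y i|) : lpNorm p x ≤ lpNorm p y := by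
  unfold lpNorm
  split
  · cases isEmpty_or_nonempty (Fin k)
    · simp [Real.iSup_of_isEmpty]
    · exact ciSup_mono (Set.finite_range _).bddAbove h
  · exact Real.rpow_le_rpow (by positivity)
      (Finset.sum_le_sum fun i _ => Real.rpow_le_rpow (abs_nonneg _) (h i) ENNReal.toReal_nonneg)
      (by positivity)

theorem lpNorm_zero (hp : 1 ≤ p) : lpNorm p (0 : Fin k → ℝ) = 0 := by
  unfold lpNorm
  split
  · simp
  · rename_i hp_top
    have : p.toReal ≠ 0 := (ENNReal.toReal_pos (by positivity) hp_top).ne'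
    simp [Real.zero_rpow this, Real.zero_rpow (inv_ne_zero this)]

theorem lpNorm_add_le (hp : 1 ≤ p) (x y : Fin k → ℝ) :
    lpNorm p (x + y) ≤ lpNorm p x + lpNorm p y := by
  unfold lpNorm
  split
  · cases isEmpty_or_nonempty (Fin k)
    · simp [Real.iSup_of_isEmpty]
    · exact ciSup_le fun i => (abs_add_le _ _).trans (add_le_add
        (le_ciSup (f := fun i => |x i|) (Set.finite_range _).bddAbove i)
        (le_ciSup (f := fun i => |y i|) (Set.finite_range _).bddAbove i))
  · rename_i hp_top
    exact Real.Lp_add_le Finset.univ x y (by simpa using ENNReal.toReal_mono hp_top hp)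

theorem lpNorm_sub_le_add (hp : 1 ≤ p) (x y z : Fin k → ℝ) :
    lpNorm p (x - z) ≤ lpNorm p (x - y) + lpNorm p (y - z) := by
  simpa using lpNorm_add_le hp (x - y) (y - z)

end LpNorm

def projCube (a b : ℝ) {n : ℕ} (x : Fin n → ℝ) : Fin n → ℝ := fun i => max a (min b (x i))

section ProjCube

variable {n : ℕ} {a b : ℝ}

theorem projCube_mem_cube (hab : a ≤ b) (x : Fin n → ℝ) : projCube a b x ∈ cube n a b :=
  ⟨fun _ => le_max_left _ _, fun _ => max_le hab (min_le_left _ _)⟩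

theorem projCube_eq_self {x : Fin n → ℝ} (hx : x ∈ cube n a b) : projCube a b x = x :=
  funext fun i => by simp only [projCube, min_eq_right (hx.2 i), max_eq_right (hx.1 i)]

theorem lpNorm_projCube_sub_le {p : ℝ≥0∞} (hab : a ≤ b) (x : Fin n → ℝ) {y : Fin n → ℝ}
    (hy : y ∈ cube n a b) : lpNorm p (projCube a b x - y) ≤ lpNorm p (x - y) := by
  conv_lhs => rw [← projCube_eq_self hy]
  exact lpNorm_mono fun i => Set.abs_projIcc_sub_projIcc hab

theorem max_min_eq_sub_max_sub_max (hab : a ≤ b) (t : ℝ) :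
    max a (min b t) = b - max (b - a - max (t - a) 0) 0 := by
  rcases le_total t a with hta | hat
  · rw [max_eq_right (by linarith : t - a ≤ 0), max_eq_left (by linarith : 0 ≤ b - a - 0),
      min_eq_right (by linarith), max_eq_left hta]
    ring
  rcases le_total t b with htb | hbt
  · rw [max_eq_left (by linarith : 0 ≤ t - a), max_eq_left (by linarith : 0 ≤ b - a - (t - a)),
      min_eq_right htb, max_eq_right hat]
    ring
  · rw [max_eq_left (by linarith : 0 ≤ t - a), max_eq_right (by linarith : b - a - (t - a) ≤ 0),
      min_eq_left hbt, max_eq_right hab]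
    ring

end ProjCube

namespace DNN

-- The network modifications below are reducible so that their layer widths unfold to those of
-- the original networks when `Fin.cast`s between them are elaborated.
abbrev addOutputBias (Φ : DNN) (v : Fin (Φ.ℓ (Φ.L + 1)) → ℝ) : DNN :=
  { Φ with b := Function.update Φ.b Φ.L (Φ.b Φ.L + v) }

theorem affine_addOutputBias (Φ : DNN) (v : Fin (Φ.ℓ (Φ.L + 1)) → ℝ) {k : ℕ} (hk : k ≠ Φ.L) :
    (Φ.addOutputBias v).affine k = Φ.affine k := by
  funext z i
  simp only [affine, addOutputBias, Function.update_of_ne hk]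

theorem hidden_addOutputBias (Φ : DNN) (v : Fin (Φ.ℓ (Φ.L + 1)) → ℝ) :
    ∀ k ≤ Φ.L, (Φ.addOutputBias v).hidden k = Φ.hidden k
  | 0, _ => rfl
  | k + 1, hk => by
    funext x i
    simp only [hidden]
    rw [hidden_addOutputBias Φ v k (by omega), affine_addOutputBias Φ v (by omega)]

theorem realize_addOutputBias (Φ : DNN) (v : Fin (Φ.ℓ (Φ.L + 1)) → ℝ) (x : Fin (Φ.ℓ 0) → ℝ) :
    (Φ.addOutputBias v).realize x = Φ.realize x + v := by
  funext i
  simp only [realize]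
  rw [hidden_addOutputBias Φ v Φ.L le_rfl]
  simp only [affine, addOutputBias, Function.update_self, Pi.add_apply]
  ring

theorem Realizes.addOutputBias {Φ : DNN} {m n : ℕ} {f : (Fin m → ℝ) → (Fin n → ℝ)}
    (hf : Φ.Realizes f) (t : ℝ) :
    (Φ.addOutputBias fun _ => t).Realizes (fun x i => f x i + t) := by
  obtain ⟨hm, hn, hf⟩ := hf
  refine ⟨hm, hn, fun x i => ?_⟩
  rw [realize_addOutputBias, Pi.add_apply, ← hf]

abbrev precompConstSub (Φ : DNN) (c : ℝ) : DNN :=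
  { Φ with
    W := Function.update Φ.W 0 (-Φ.W 0)
    b := Function.update Φ.b 0 (Φ.W 0 *ᵥ (fun _ => c) + Φ.b 0) }

theorem affine_hidden_precompConstSub (Φ : DNN) (c : ℝ) (x : Fin (Φ.ℓ 0) → ℝ) :
    ∀ k, (Φ.precompConstSub c).affine k ((Φ.precompConstSub c).hidden k x) =
      Φ.affine k (Φ.hidden k fun j => c - x j)
  | 0 => by
    funext i
    simp only [affine, hidden, precompConstSub, Function.update_self, Matrix.neg_apply,
      Pi.add_apply, Matrix.mulVec, dotProduct, id, mul_sub, Finset.sum_sub_distrib]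
    simp only [neg_mul, Finset.sum_neg_distrib]
    ring
  | k + 1 => by
    have hk : (Φ.precompConstSub c).hidden (k + 1) x = Φ.hidden (k + 1) fun j => c - x j := by
      funext i
      simp only [hidden, affine_hidden_precompConstSub Φ c x k]
    rw [hk]
    funext i
    simp only [affine, precompConstSub, Function.update_of_ne (Nat.succ_ne_zero k)]

theorem Realizes.precompConstSub {Φ : DNN} {m n : ℕ} {f : (Fin m → ℝ) → (Fin n → ℝ)}
    (hf : Φ.Realizes f) (c : ℝ) :
    (Φ.precompConstSub c).Realizes (fun x => f fun j => c - x j) := by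
  obtain ⟨hm, hn, hf⟩ := hf
  exact ⟨hm, hn, fun x i =>
    (hf _ i).trans (congrFun (affine_hidden_precompConstSub Φ c _ Φ.L) _).symm⟩

theorem params_precompConstSub (Φ : DNN) (c : ℝ) : (Φ.precompConstSub c).params = Φ.params :=
  rfl

theorem params_addOutputBias (Φ : DNN) (v : Fin (Φ.ℓ (Φ.L + 1)) → ℝ) :
    (Φ.addOutputBias v).params = Φ.params :=
  rfl

def affineLayer {m n : ℕ} (A : Matrix (Fin n) (Fin m) ℝ) (v : Fin n → ℝ) : DNN where
  L := 0
  ℓ := fun | 0 => m | _ + 1 => n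
  W := fun | 0 => A | _ + 1 => 0
  b := fun _ => v

theorem realizes_affineLayer {m n : ℕ} (A : Matrix (Fin n) (Fin m) ℝ) (v : Fin n → ℝ) :
    (affineLayer A v).Realizes (fun x => A *ᵥ x + v) :=
  ⟨rfl, rfl, fun _ _ => rfl⟩

theorem params_affineLayer {m n : ℕ} (A : Matrix (Fin n) (Fin m) ℝ) (v : Fin n → ℝ) :
    (affineLayer A v).params = n * (m + 1) := by
  simp [params, affineLayer]

theorem affine_congr_index (Φ : DNN) {k k' : ℕ} (e : k = k') (z : Fin (Φ.ℓ k) → ℝ)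
    (i : Fin (Φ.ℓ (k + 1))) :
    Φ.affine k z i = Φ.affine k' (z ∘ Fin.cast (congrArg Φ.ℓ e).symm)
      (Fin.cast (congrArg (fun k => Φ.ℓ (k + 1)) e) i) := by
  subst e
  rfl

section Comp

variable (Φ₂ Φ₁ : DNN)

def compDims (k : ℕ) : ℕ := if k ≤ Φ₁.L + 1 then Φ₁.ℓ k else Φ₂.ℓ (k - (Φ₁.L + 1))

variable {Φ₂ Φ₁}

theorem compDims_of_le {k : ℕ} (hk : k ≤ Φ₁.L + 1) : compDims Φ₂ Φ₁ k = Φ₁.ℓ k :=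
  if_pos hk

theorem compDims_of_lt (h : Φ₁.ℓ (Φ₁.L + 1) = Φ₂.ℓ 0) {k : ℕ} (hk : Φ₁.L < k) :
    compDims Φ₂ Φ₁ k = Φ₂.ℓ (k - (Φ₁.L + 1)) := by
  unfold compDims
  split_ifs with hk'
  · obtain rfl : k = Φ₁.L + 1 := by omega
    simpa using h
  · rfl

theorem compDims_succ_of_lt (h : Φ₁.ℓ (Φ₁.L + 1) = Φ₂.ℓ 0) {k : ℕ} (hk : Φ₁.L < k) :
    compDims Φ₂ Φ₁ (k + 1) = Φ₂.ℓ (k - (Φ₁.L + 1) + 1) :=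
  (compDims_of_lt h (by omega)).trans (congrArg Φ₂.ℓ (by omega))

theorem compDims_add (h : Φ₁.ℓ (Φ₁.L + 1) = Φ₂.ℓ 0) (j : ℕ) :
    compDims Φ₂ Φ₁ (Φ₁.L + 1 + j) = Φ₂.ℓ j :=
  (compDims_of_lt h (by omega)).trans (congrArg Φ₂.ℓ (by omega))

abbrev comp (Φ₂ Φ₁ : DNN) (h : Φ₁.ℓ (Φ₁.L + 1) = Φ₂.ℓ 0) : DNN where
  L := Φ₁.L + 1 + Φ₂.L
  ℓ := compDims Φ₂ Φ₁
  W k :=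
    if hk : k ≤ Φ₁.L then
      (Φ₁.W k).submatrix (Fin.cast (compDims_of_le (by omega)))
        (Fin.cast (compDims_of_le (by omega)))
    else
      (Φ₂.W (k - (Φ₁.L + 1))).submatrix (Fin.cast (compDims_succ_of_lt h (by omega)))
        (Fin.cast (compDims_of_lt h (by omega)))
  b k :=
    if hk : k ≤ Φ₁.L then
      Φ₁.b k ∘ Fin.cast (compDims_of_le (by omega))
    else
      Φ₂.b (k - (Φ₁.L + 1)) ∘ Fin.cast (compDims_succ_of_lt h (by omega))

variable (h : Φ₁.ℓ (Φ₁.L + 1) = Φ₂.ℓ 0)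

theorem affine_comp_of_le {k : ℕ} (hk : k ≤ Φ₁.L) (z : Fin (compDims Φ₂ Φ₁ k) → ℝ)
    (i : Fin (compDims Φ₂ Φ₁ (k + 1))) :
    (comp Φ₂ Φ₁ h).affine k z i =
      Φ₁.affine k (z ∘ Fin.cast (compDims_of_le (by omega)).symm)
        (Fin.cast (compDims_of_le (by omega)) i) := by
  simp only [affine, comp, dif_pos hk, Matrix.submatrix_apply, Function.comp_apply]
  congr 1
  exact Fintype.sum_equiv (finCongr (compDims_of_le (by omega))) _ _ fun _ => rfl

theorem affine_comp_of_lt {k : ℕ} (hk : Φ₁.L < k) (z : Fin (compDims Φ₂ Φ₁ k) → ℝ)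
    (i : Fin (compDims Φ₂ Φ₁ (k + 1))) :
    (comp Φ₂ Φ₁ h).affine k z i =
      Φ₂.affine (k - (Φ₁.L + 1)) (z ∘ Fin.cast (compDims_of_lt h hk).symm)
        (Fin.cast (compDims_succ_of_lt h hk) i) := by
  simp only [affine, comp, dif_neg (show ¬ k ≤ Φ₁.L by omega), Matrix.submatrix_apply,
    Function.comp_apply]
  congr 1
  exact Fintype.sum_equiv (finCongr (compDims_of_lt h hk)) _ _ fun _ => rfl

theorem hidden_comp_of_le (x : Fin (compDims Φ₂ Φ₁ 0) → ℝ) :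
    ∀ k, (hk : k ≤ Φ₁.L + 1) → ∀ i, (comp Φ₂ Φ₁ h).hidden k x i =
      Φ₁.hidden k (x ∘ Fin.cast (compDims_of_le (Nat.zero_le _)).symm)
        (Fin.cast (compDims_of_le hk) i)
  | 0, _, _ => rfl
  | k + 1, hk, i => by
    have ih := hidden_comp_of_le x k (by omega)
    simp only [hidden]
    rw [affine_comp_of_le h (by omega)]
    congr 2
    funext j
    exact ih _

theorem hidden_comp_add (x : Fin (compDims Φ₂ Φ₁ 0) → ℝ) :
    ∀ j i, (comp Φ₂ Φ₁ h).hidden (Φ₁.L + 1 + j) x i =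
      Φ₂.hidden j (fun t => max (Φ₁.realize (x ∘ Fin.cast (compDims_of_le (Nat.zero_le _)).symm)
        (Fin.cast h.symm t)) 0) (Fin.cast (compDims_add h j) i)
  | 0, i => hidden_comp_of_le h x (Φ₁.L + 1) le_rfl i
  | j + 1, i => by
    have ih := hidden_comp_add x j
    show max ((comp Φ₂ Φ₁ h).affine (Φ₁.L + 1 + j) ((comp Φ₂ Φ₁ h).hidden (Φ₁.L + 1 + j) x) i) 0
      = _
    rw [affine_comp_of_lt h (by omega),
      affine_congr_index Φ₂ (show Φ₁.L + 1 + j - (Φ₁.L + 1) = j by omega)]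
    congr 2
    funext t
    exact ih _

theorem realize_comp (x : Fin (compDims Φ₂ Φ₁ 0) → ℝ)
    (i : Fin (compDims Φ₂ Φ₁ (Φ₁.L + 1 + Φ₂.L + 1))) :
    (comp Φ₂ Φ₁ h).realize x i =
      Φ₂.realize (fun t => max (Φ₁.realize (x ∘ Fin.cast (compDims_of_le (Nat.zero_le _)).symm)
        (Fin.cast h.symm t)) 0) (Fin.cast (compDims_add h (Φ₂.L + 1)) i) := by
  simp only [realize]
  rw [affine_comp_of_lt h (by omega),
    affine_congr_index Φ₂ (show Φ₁.L + 1 + Φ₂.L - (Φ₁.L + 1) = Φ₂.L by omega)]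
  congr 1
  funext t
  exact hidden_comp_add h x _ _

theorem params_comp : (comp Φ₂ Φ₁ h).params = Φ₁.params + Φ₂.params := by
  simp only [params]
  rw [show Φ₁.L + 1 + Φ₂.L + 1 = (Φ₁.L + 1) + (Φ₂.L + 1) by omega, Finset.sum_range_add]
  congr 1
  · refine Finset.sum_congr rfl fun k hk => ?_
    rw [Finset.mem_range] at hk
    rw [compDims_of_le (by omega), compDims_of_le (by omega)]
  · refine Finset.sum_congr rfl fun j _ => ?_
    rw [compDims_of_lt h (by omega), compDims_of_lt h (by omega)]
    congr 3 <;> omega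

end Comp

theorem Realizes.exists_comp_relu {Φ₁ Φ₂ : DNN} {m n q : ℕ} {f₁ : (Fin m → ℝ) → Fin n → ℝ}
    {f₂ : (Fin n → ℝ) → Fin q → ℝ} (h₁ : Φ₁.Realizes f₁) (h₂ : Φ₂.Realizes f₂) :
    ∃ Φ : DNN, Φ.Realizes (fun x => f₂ fun i => max (f₁ x i) 0) ∧
      Φ.params = Φ₁.params + Φ₂.params := by
  obtain ⟨hm₁, hn₁, hf₁⟩ := h₁
  obtain ⟨hm₂, hn₂, hf₂⟩ := h₂
  have h : Φ₁.ℓ (Φ₁.L + 1) = Φ₂.ℓ 0 := hn₁.trans hm₂.symm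
  refine ⟨comp Φ₂ Φ₁ h, ⟨(compDims_of_le (Φ₂ := Φ₂) (Nat.zero_le _)).trans hm₁,
    (compDims_add h _).trans hn₂, fun x i => ?_⟩, params_comp h⟩
  rw [realize_comp]
  refine (hf₂ _ i).trans ?_
  congr 1
  funext t
  exact congrArg (max · 0) (hf₁ x _)

theorem Realizes.exists_comp_projCube {Ψ Φ : DNN} {m n q : ℕ} {R : (Fin m → ℝ) → Fin n → ℝ}
    {G : (Fin n → ℝ) → Fin q → ℝ} (hΨ : Ψ.Realizes R) (hΦ : Φ.Realizes G) {a b : ℝ}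
    (hab : a ≤ b) :
    ∃ N : DNN, N.Realizes (fun x => G (projCube a b (R x))) ∧
      N.params = Ψ.params + n * (n + 1) + Φ.params := by
  obtain ⟨N₁, hN₁, hN₁p⟩ := (hΨ.addOutputBias (-a)).exists_comp_relu
    (realizes_affineLayer (-1 : Matrix (Fin n) (Fin n) ℝ) fun _ => b - a)
  obtain ⟨N, hN, hNp⟩ := hN₁.exists_comp_relu (hΦ.precompConstSub b)
  refine ⟨N, ?_, by rw [hNp, hN₁p, params_addOutputBias, params_affineLayer,
    params_precompConstSub]⟩
  convert hN using 3 with x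
  funext j
  simp only [projCube, Matrix.neg_mulVec, Matrix.one_mulVec, Pi.add_apply, Pi.neg_apply]
  rw [max_min_eq_sub_max_sub_max hab, ← sub_eq_add_neg, neg_add_eq_sub]

end DNN

theorem exists_realizes_of_cost_le {p : ℝ≥0∞} {m n : ℕ} {D : Set (Fin m → ℝ)}
    {f : (Fin m → ℝ) → (Fin n → ℝ)} {L ε B : ℝ} (hB : 0 ≤ B)
    (hcost : Cost p D f L ε ≤ ENNReal.ofReal B) :
    ∃ g : (Fin m → ℝ) → (Fin n → ℝ), (∃ Φ : DNN, Φ.Realizes g ∧ (Φ.params : ℝ) ≤ B) ∧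
      (∀ x ∈ D, lpNorm p (g x - f x) ≤ ε) ∧
      (∀ x ∈ D, ∀ y ∈ D, lpNorm p (g x - g y) ≤ L * lpNorm p (x - y)) := by
  -- The infimum runs over natural numbers, so some network lies below `⌊B⌋₊ + 1`.
  have hlt : Cost p D f L ε < ((⌊B⌋₊ + 1 : ℕ) : ℝ≥0∞) :=
    hcost.trans_lt <| (ENNReal.ofReal_lt_natCast (Nat.succ_ne_zero _)).2 <| by
      exact_mod_cast Nat.lt_floor_add_one B
  obtain ⟨_, ⟨Φ, g, hΦ, rfl, happrox, hlip⟩, hN⟩ := sInf_lt_iff.1 hlt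
  have hΦB : Φ.params ≤ ⌊B⌋₊ := Nat.lt_succ_iff.1 (by exact_mod_cast hN)
  exact ⟨g, ⟨Φ, hΦ, (Nat.cast_le.2 hΦB).trans (Nat.floor_le hB)⟩, happrox, hlip⟩

section Composition

variable {dims : ℕ → ℕ} {a b : ℕ → ℝ} {n : ℕ}

theorem exists_realizes_compSeq_projCube {g : ∀ i, (Fin (dims i) → ℝ) → Fin (dims (i + 1)) → ℝ}
    {D : ℕ} {P : ℝ} (hab : ∀ i < n, a i ≤ b i) (hdims : ∀ i ≤ n, dims i ≤ D)
    (hg : ∀ i < n, ∃ Φ : DNN, Φ.Realizes (g i) ∧ (Φ.params : ℝ) ≤ P) :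
    ∃ Ψ : DNN, Ψ.Realizes (compSeq dims (fun i => g i ∘ projCube (a i) (b i)) n) ∧
      (Ψ.params : ℝ) ≤ (n + 1) * (D * (D + 1)) + n * P := by
  have hD : ∀ i ≤ n, (dims i : ℝ) * (dims i + 1) ≤ D * (D + 1) := fun i hi => by
    have : (dims i : ℝ) ≤ D := by exact_mod_cast hdims i hi
    gcongr
  induction n with
  | zero =>
    refine ⟨DNN.affineLayer (1 : Matrix (Fin (dims 0)) (Fin (dims 0)) ℝ) 0, ?_, ?_⟩
    · convert DNN.realizes_affineLayer _ _ using 1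
      funext x
      simp [compSeq]
    · simpa [DNN.params_affineLayer] using hD 0 le_rfl
  | succ n ih =>
    obtain ⟨Ψ, hΨ, hΨP⟩ := ih (fun i hi => hab i (by omega)) (fun i hi => hdims i (by omega))
      (fun i hi => hg i (by omega)) (fun i hi => hD i (by omega))
    obtain ⟨Φ, hΦ, hΦP⟩ := hg n (by omega)
    obtain ⟨N, hN, hNP⟩ := hΨ.exists_comp_projCube hΦ (hab n (by omega))
    refine ⟨N, hN, ?_⟩
    rw [hNP]
    push_cast
    linarith [hD n (by omega)]

theorem lpNorm_compSeq_projCube_sub_le {p : ℝ≥0∞} (hp : 1 ≤ p)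
    {f g : ∀ i, (Fin (dims i) → ℝ) → Fin (dims (i + 1)) → ℝ} {δ : ℝ}
    (hab : ∀ i < n, a i ≤ b i)
    (hmap : ∀ i, i + 1 < n → ∀ x ∈ cube (dims i) (a i) (b i),
      f i x ∈ cube (dims (i + 1)) (a (i + 1)) (b (i + 1)))
    (happrox : ∀ i < n, ∀ x ∈ cube (dims i) (a i) (b i), lpNorm p (g i x - f i x) ≤ δ)
    (hlip : ∀ i < n, ∀ x ∈ cube (dims i) (a i) (b i), ∀ y ∈ cube (dims i) (a i) (b i),
      lpNorm p (g i x - g i y) ≤ lpNorm p (x - y))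
    {x : Fin (dims 0) → ℝ} (hx : x ∈ cube (dims 0) (a 0) (b 0)) :
    lpNorm p (compSeq dims (fun i => g i ∘ projCube (a i) (b i)) n x - compSeq dims f n x) ≤
      n * δ := by
  have hmem : ∀ j < n, compSeq dims f j x ∈ cube (dims j) (a j) (b j) := by
    intro j hj
    induction j with
    | zero => exact hx
    | succ j ih => exact hmap j hj _ (ih (by omega))
  suffices ∀ j ≤ n, lpNorm p (compSeq dims (fun i => g i ∘ projCube (a i) (b i)) j x -
      compSeq dims f j x) ≤ j * δ from this n le_rfl
  intro j hj
  induction j with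
  | zero => simp [compSeq, lpNorm_zero hp]
  | succ j ih =>
    set y := compSeq dims (fun i => g i ∘ projCube (a i) (b i)) j x
    set z := compSeq dims f j x
    have hz := hmem j (by omega)
    calc lpNorm p (g j (projCube (a j) (b j) y) - f j z)
        ≤ lpNorm p (g j (projCube (a j) (b j) y) - g j z) + lpNorm p (g j z - f j z) :=
          lpNorm_sub_le_add hp _ _ _
      _ ≤ lpNorm p (projCube (a j) (b j) y - z) + δ :=
          add_le_add (hlip j (by omega) _ (projCube_mem_cube (hab j (by omega)) y) _ hz)
            (happrox j (by omega) z hz)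
      _ ≤ j * δ + δ :=
          add_le_add ((lpNorm_projCube_sub_le (hab j (by omega)) y hz).trans (ih (by omega))) le_rfl
      _ = (j + 1 : ℕ) * δ := by push_cast; ring

end Composition

theorem add_one_mul_add_mul_le_pow {c : ℕ} (hc : 0 < c) {X E n D : ℝ} (hX : 1 ≤ X) (hE : 1 ≤ E)
    (hn : n ≤ X) (hD₀ : 0 ≤ D) (hD : D ≤ X) :
    (n + 1) * (D * (D + 1)) + n * (X * (X ^ c * E)) ≤ 5 * X ^ (c + 2) * E := by
  have hXpow : X ^ 3 ≤ X ^ (c + 2) := pow_le_pow_right₀ hX (by omega)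
  have hfirst : (n + 1) * (D * (D + 1)) ≤ 4 * X ^ 3 :=
    calc (n + 1) * (D * (D + 1)) ≤ (2 * X) * (X * (2 * X)) := by gcongr <;> linarith
      _ = 4 * X ^ 3 := by ring
  have hsecond : n * (X * (X ^ c * E)) ≤ X ^ (c + 2) * E :=
    calc n * (X * (X ^ c * E)) ≤ X * (X * (X ^ c * E)) := by gcongr
      _ = X ^ (c + 2) * E := by ring
  have hE' : X ^ (c + 2) ≤ X ^ (c + 2) * E := le_mul_of_one_le_right (by positivity) hE
  linarith

theorem add_one_mul_add_mul_le_mul_pow {c d n D : ℕ} (hc : 0 < c) (hd : 0 < d) {ε : ℝ}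
    (hε : 0 < ε) (hε₁ : ε ≤ 1) (hn : n ≤ c * d ^ c) (hD : D ≤ d ^ c) :
    ((n : ℝ) + 1) * (D * (D + 1)) + n * (c * d ^ c * (ε / (c * d ^ c)) ^ (-(c : ℤ))) ≤
      ((5 * c ^ (c + 2) + c * (c + 2) : ℕ) : ℝ) * d ^ (5 * c ^ (c + 2) + c * (c + 2)) *
        ε ^ (-(c : ℤ)) := by
  set X : ℝ := c * d ^ c with hX
  have hX₁ : 1 ≤ X := by rw [hX]; exact_mod_cast Nat.one_le_iff_ne_zero.2 (by positivity)
  have hE : 1 ≤ ε ^ (-(c : ℤ)) := one_le_zpow_of_nonpos₀ hε hε₁ (by omega)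
  have hδ : (ε / X) ^ (-(c : ℤ)) = X ^ c * ε ^ (-(c : ℤ)) := by
    rw [zpow_neg, zpow_neg, zpow_natCast, zpow_natCast, div_pow, inv_div, div_eq_mul_inv]
  have hDX : (D : ℝ) ≤ X := by
    rw [hX]
    exact_mod_cast hD.trans (Nat.le_mul_of_pos_left _ hc)
  calc _ = (n + 1) * (D * (D + 1)) + n * (X * (X ^ c * ε ^ (-(c : ℤ)))) := by rw [hδ]
    _ ≤ 5 * X ^ (c + 2) * ε ^ (-(c : ℤ)) :=
        add_one_mul_add_mul_le_pow hc hX₁ hE (by rw [hX]; exact_mod_cast hn) (by positivity) hDX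
    _ = (5 * c ^ (c + 2) : ℕ) * (d : ℝ) ^ (c * (c + 2)) * ε ^ (-(c : ℤ)) := by
        rw [hX]; push_cast; ring
    _ ≤ _ := by
        have hd₁ : (1 : ℝ) ≤ d := by exact_mod_cast hd
        gcongr
        · exact_mod_cast Nat.le_add_right _ _
        · exact Nat.le_add_left _ _

theorem abstract_composition_approx_polynomial_number_general
    (c : ℕ) (hc : 0 < c) (p : ℝ≥0∞) (hp : 1 ≤ p)
    (k : ℕ → ℕ) (dims : ℕ → ℕ → ℕ) (a b : ℕ → ℕ → ℝ)
    (g : ∀ d i : ℕ, (Fin (dims d i) → ℝ) → (Fin (dims d (i + 1)) → ℝ))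
    (hk : ∀ d, 0 < d → 1 ≤ k d ∧ k d ≤ c * d ^ c)
    (hdims : ∀ d, 0 < d → ∀ i ≤ k d, 1 ≤ dims d i ∧ dims d i ≤ d ^ c)
    (hab : ∀ d, 0 < d → ∀ i < k d, a d i < b d i)
    (hcost : ∀ d, 0 < d → ∀ i < k d, ∀ ε : ℝ, 0 < ε → ε ≤ 1 →
      Cost p (cube (dims d i) (a d i) (b d i)) (g d i) 1 ε ≤
        ENNReal.ofReal ((c : ℝ) * (d : ℝ) ^ c * ε ^ (-(c : ℤ))))
    (hmap : ∀ d, 0 < d → ∀ i, i + 1 < k d → ∀ x ∈ cube (dims d i) (a d i) (b d i),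
      g d i x ∈ cube (dims d (i + 1)) (a d (i + 1)) (b d (i + 1))) :
    ∃ K : ℕ, 0 < K ∧ ∀ d, 0 < d → ∀ ε : ℝ, 0 < ε → ε ≤ 1 →
      ∃ (Φ : DNN) (R : (Fin (dims d 0) → ℝ) → (Fin (dims d (k d)) → ℝ)),
        Φ.Realizes R ∧
        (Φ.params : ℝ) ≤ (K : ℝ) * (d : ℝ) ^ K * ε ^ (-(c : ℤ)) ∧
        ∀ x ∈ cube (dims d 0) (a d 0) (b d 0),
          lpNorm p (R x - compSeq (dims d) (g d) (k d) x) ≤ ε := by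
  refine ⟨5 * c ^ (c + 2) + c * (c + 2), by positivity, fun d hd ε hε hε₁ => ?_⟩
  have hkX : (k d : ℝ) ≤ c * d ^ c := by exact_mod_cast (hk d hd).2
  have hX₁ : (1 : ℝ) ≤ c * d ^ c := le_trans (by exact_mod_cast (hk d hd).1) hkX
  set δ := ε / (c * d ^ c)
  have hδ : 0 < δ ∧ δ ≤ 1 := ⟨div_pos hε (by linarith), (div_le_self hε.le hX₁).trans hε₁⟩
  choose! G hGnet hGapprox hGlip using fun i hi =>
    exists_realizes_of_cost_le (by positivity) (hcost d hd i hi δ hδ.1 hδ.2)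
  obtain ⟨Ψ, hΨ, hΨP⟩ := exists_realizes_compSeq_projCube (fun i hi => (hab d hd i hi).le)
    (fun i hi => (hdims d hd i hi).2) hGnet
  refine ⟨Ψ, _, hΨ, hΨP.trans (add_one_mul_add_mul_le_mul_pow hc hd hε hε₁ (hk d hd).2 le_rfl),
    fun x hx => ?_⟩
  calc _ ≤ k d * δ := lpNorm_compSeq_projCube_sub_le hp (fun i hi => (hab d hd i hi).le)
        (hmap d hd) hGapprox (fun i hi x hx y hy => by simpa using hGlip i hi x hx y hy) hx
    _ ≤ c * d ^ c * δ := by gcongr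
    _ = ε := mul_div_cancel₀ ε (by linarith)

/-- **Proposition 2.8**: abstract DNN approximation of compositions of a polynomially
growing number `k(d) ≤ c d^c` of functions, each approximable with Lipschitz constant `1`
at cost `≤ c d^c ε⁻ᶜ`. -/
theorem abstract_composition_approx_polynomial_number
    (c : ℕ) (hc : 0 < c) (p : ℝ≥0∞) (hp : 1 ≤ p)
    (k : ℕ → ℕ) (dims : ℕ → ℕ → ℕ) (a b : ℕ → ℕ → ℝ)
    (g : ∀ d i : ℕ, (Fin (dims d i) → ℝ) → (Fin (dims d (i + 1)) → ℝ))
    (hk : ∀ d, 0 < d → 1 ≤ k d ∧ k d ≤ c * d ^ c)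
    (hdims : ∀ d, 0 < d → ∀ i ≤ k d, 1 ≤ dims d i ∧ dims d i ≤ d ^ c)
    (hab : ∀ d, 0 < d → ∀ i < k d, a d i < b d i)
    (hcont : ∀ d, 0 < d → ∀ i < k d,
      ContinuousOn (g d i) (cube (dims d i) (a d i) (b d i)))
    (hcost : ∀ d, 0 < d → ∀ i < k d, ∀ ε : ℝ, 0 < ε → ε ≤ 1 →
      Cost p (cube (dims d i) (a d i) (b d i)) (g d i) 1 ε ≤
        ENNReal.ofReal ((c : ℝ) * (d : ℝ) ^ c * ε ^ (-(c : ℤ))))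
    (hmap : ∀ d, 0 < d → ∀ i, i + 1 < k d → ∀ x ∈ cube (dims d i) (a d i) (b d i),
      g d i x ∈ cube (dims d (i + 1)) (a d (i + 1)) (b d (i + 1))) :
    ∃ K : ℕ, 0 < K ∧ ∀ d, 0 < d → ∀ ε : ℝ, 0 < ε → ε ≤ 1 →
      ∃ (Φ : DNN) (R : (Fin (dims d 0) → ℝ) → (Fin (dims d (k d)) → ℝ)),
        Φ.Realizes R ∧
        (Φ.params : ℝ) ≤ (K : ℝ) * (d : ℝ) ^ K * ε ^ (-(c : ℤ)) ∧
        ∀ x ∈ cube (dims d 0) (a d 0) (b d 0),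
          lpNorm p (R x - compSeq (dims d) (g d) (k d) x) ≤ ε :=
  abstract_composition_approx_polynomial_number_general c hc p hp k dims a b g hk hdims hab hcost
    hmap
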